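/- arXiv:2212.05920 — 2 statements merged into one kernel-verified Lean document; each statement's English description precedes it below -/
import Mathlib

section
/- For every real p ≥ 1, every positive integer N, and every tuple of real numbers c_1, ..., c_N, the average over all sign vectors (ε_1,...,ε_N) ∈ {±1}^N of |∑_{n≤N} c_n ε_n|^p is at most p^{p/2} · (∑_{n≤N} c_n^2)^{p/2}. -/
/-!
Put `k = ⌈p/2⌉`. By the power-mean inequality the `p`-th moment of the Rademacher sum
`S = ∑ cₙ εₙ` is at most its `2k`-th moment to the power `p/2k`. Splitting off one sign at a time,
`𝔼 S^{2k} ≤ (2k-1)‼ (∑ cₙ²)^k`, the `2k`-th moment of a centred Gaussian of the same variance: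
the induction step reduces to `C(2k,2j) (2j-1)‼ ≤ (2k-1)‼ C(k,j)`. Finally
`(2k-1)‼ ≤ k^k ≤ p^k`.
-/

open Finset Nat

-- At `k = 0` the truncated subtraction gives `0‼ = 1`, the usual value of `(-1)‼`.
theorem doubleFactorial_two_mul_sub_one_mul (k : ℕ) : (2 * k - 1)‼ * (2 ^ k * k !) = (2 * k)! := by
  rcases k with _ | k
  · rfl
  · rw [← doubleFactorial_two_mul, mul_comm, show 2 * (k + 1) = 2 * k + 1 + 1 by ring,
      factorial_eq_mul_doubleFactorial]
    rfl

theorem doubleFactorial_two_mul_sub_one_le_pow (k : ℕ) : (2 * k - 1)‼ ≤ k ^ k := by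
  have h := factorial_two_mul_le k
  rw [← doubleFactorial_two_mul_sub_one_mul, mul_pow, mul_comm (2 ^ k) (k ^ k), mul_assoc] at h
  exact Nat.le_of_mul_le_mul_right h (by positivity)

theorem choose_mul_doubleFactorial_le {j k : ℕ} (h : j ≤ k) :
    (2 * k).choose (2 * j) * (2 * j - 1)‼ ≤ (2 * k - 1)‼ * k.choose j := by
  obtain ⟨m, rfl⟩ := Nat.exists_eq_add_of_le h
  have hm : (2 * m)‼ ≤ (2 * m)! := doubleFactorial_le_factorial _
  rw [doubleFactorial_two_mul] at hm
  -- Multiplied by `2^j j! (2m)!`, the left side is `(2k)!`, and so is the right side once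
  -- `(2m)!` is lowered to `(2m)‼ = 2^m m!`.
  refine Nat.le_of_mul_le_mul_right (c := 2 ^ j * j ! * (2 * m)!) ?_ (by positivity)
  calc (2 * (j + m)).choose (2 * j) * (2 * j - 1)‼ * (2 ^ j * j ! * (2 * m)!)
      = (2 * (j + m))! := by
        rw [← choose_mul_factorial_mul_factorial (n := 2 * (j + m)) (k := 2 * j) (by omega),
          ← doubleFactorial_two_mul_sub_one_mul j, show 2 * (j + m) - 2 * j = 2 * m by omega]
        ring
    _ = (2 * (j + m) - 1)‼ * (j + m).choose j * (2 ^ j * j ! * (2 ^ m * m !)) := by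
        rw [← doubleFactorial_two_mul_sub_one_mul,
          ← choose_mul_factorial_mul_factorial (n := j + m) (k := j) (by omega),
          Nat.add_sub_cancel_left, pow_add]
        ring
    _ ≤ _ := by gcongr

theorem add_pow_two_mul_add_sub_pow_two_mul {R : Type*} [CommRing R] (x y : R) (k : ℕ) :
    (x + y) ^ (2 * k) + (x - y) ^ (2 * k)
      = 2 * ∑ j ∈ range (k + 1),
          ((2 * k).choose (2 * j) : R) * x ^ (2 * j) * (y ^ 2) ^ (k - j) := by
  set g : ℕ → R := fun m => x ^ m * y ^ (2 * k - m) * (2 * k).choose m * (1 + (-1) ^ m)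
  have hsum : (x + y) ^ (2 * k) + (x - y) ^ (2 * k) = ∑ m ∈ range (2 * k + 1), g m := by
    rw [sub_eq_add_neg, add_pow, add_pow, ← sum_add_distrib]
    refine sum_congr rfl fun m hm => ?_
    have hm : m ≤ 2 * k := Nat.lt_succ_iff.mp (mem_range.mp hm)
    have hsign : (-1 : R) ^ (2 * k - m) = (-1) ^ m := by
      rcases Nat.even_or_odd m with hm' | hm'
      · rw [hm'.neg_one_pow, ((Nat.even_sub hm).mpr (by grind)).neg_one_pow]
      · rw [hm'.neg_one_pow, ((Nat.odd_sub hm).mpr (by grind)).neg_one_pow]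
    rw [neg_pow y, hsign]
    ring
  have hodd : ∀ m ∈ range (2 * k + 1), m ∉ (range (k + 1)).image (2 * ·) → g m = 0 := by
    intro m hm hm'
    have : Odd m := by
      rw [← Nat.not_even_iff_odd]; rintro ⟨j, rfl⟩
      exact hm' (mem_image.mpr ⟨j, by simp at hm ⊢; omega, by ring⟩)
    simp [g, this.neg_one_pow]
  rw [hsum, ← sum_subset (fun m hm => by simp at hm ⊢; omega) hodd,
    sum_image (fun a _ b _ h => by simpa using h), mul_sum]
  refine sum_congr rfl fun j hj => ?_
  simp only [g, (even_two_mul j).neg_one_pow, ← pow_mul, show 2 * k - 2 * j = 2 * (k - j) by omega]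
  ring

theorem sum_fin_succ_pi_bool {M : Type*} [AddCommMonoid M] {N : ℕ}
    (F : (Fin (N + 1) → Bool) → M) :
    ∑ ε, F ε = ∑ ε, (F (Fin.cons true ε) + F (Fin.cons false ε)) := by
  rw [← (Fin.consEquiv fun _ => Bool).sum_comp, Fintype.sum_prod_type, Fintype.sum_bool,
    sum_add_distrib]
  rfl

theorem sum_choose_mul_le_doubleFactorial_mul_add_pow {t s C : ℝ} (ht : 0 ≤ t) (hs : 0 ≤ s)
    (hC : 0 ≤ C) (k : ℕ) (a : ℕ → ℝ) (ha : ∀ j ≤ k, a j ≤ C * (2 * j - 1)‼ * s ^ j) :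
    ∑ j ∈ range (k + 1), ((2 * k).choose (2 * j) : ℝ) * t ^ (k - j) * a j
      ≤ C * (2 * k - 1)‼ * (s + t) ^ k := by
  calc ∑ j ∈ range (k + 1), ((2 * k).choose (2 * j) : ℝ) * t ^ (k - j) * a j
      ≤ ∑ j ∈ range (k + 1),
          (((2 * k).choose (2 * j) * (2 * j - 1)‼ : ℕ) : ℝ) * (C * s ^ j * t ^ (k - j)) := by
        refine sum_le_sum fun j hj => ?_
        calc ((2 * k).choose (2 * j) : ℝ) * t ^ (k - j) * a j
            ≤ ((2 * k).choose (2 * j) : ℝ) * t ^ (k - j) * (C * (2 * j - 1)‼ * s ^ j) := by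
              gcongr; exact ha j (Nat.lt_succ_iff.mp (mem_range.mp hj))
          _ = _ := by push_cast; ring
    _ ≤ ∑ j ∈ range (k + 1),
          (((2 * k - 1)‼ * k.choose j : ℕ) : ℝ) * (C * s ^ j * t ^ (k - j)) := by
        refine sum_le_sum fun j hj => mul_le_mul_of_nonneg_right ?_ (by positivity)
        exact_mod_cast choose_mul_doubleFactorial_le (Nat.lt_succ_iff.mp (mem_range.mp hj))
    _ = C * (2 * k - 1)‼ * (s + t) ^ k := by
        rw [add_pow, mul_sum]
        refine sum_congr rfl fun j _ => ?_
        push_cast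
        ring

def rademacherSum {N : ℕ} (c : Fin N → ℝ) (ε : Fin N → Bool) : ℝ :=
  ∑ n, c n * (if ε n then 1 else -1)

theorem rademacherSum_cons {N : ℕ} (c : Fin (N + 1) → ℝ) (b : Bool) (ε : Fin N → Bool) :
    rademacherSum c (Fin.cons b ε)
      = rademacherSum (Fin.tail c) ε + c 0 * (if b then 1 else -1) := by
  simp [rademacherSum, Fin.sum_univ_succ, Fin.tail, add_comm]

theorem sum_rademacherSum_pow_le {N : ℕ} (c : Fin N → ℝ) (k : ℕ) :
    ∑ ε, rademacherSum c ε ^ (2 * k) ≤ 2 ^ N * (2 * k - 1)‼ * (∑ n, c n ^ 2) ^ k := by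
  induction N generalizing k with
  | zero => cases k <;> simp [rademacherSum]
  | succ N ih =>
    have hsplit : ∑ ε, rademacherSum c ε ^ (2 * k)
        = 2 * ∑ j ∈ range (k + 1), ((2 * k).choose (2 * j) : ℝ) * (c 0 ^ 2) ^ (k - j)
            * ∑ ε, rademacherSum (Fin.tail c) ε ^ (2 * j) := by
      simp only [sum_fin_succ_pi_bool (fun ε => rademacherSum c ε ^ (2 * k)), rademacherSum_cons,
        if_true, Bool.false_eq_true, if_false, mul_one, mul_neg, ← sub_eq_add_neg,
        add_pow_two_mul_add_sub_pow_two_mul, ← mul_sum, sum_comm (s := univ)]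
      congr 1
      exact sum_congr rfl fun j _ => by rw [mul_sum]; exact sum_congr rfl fun ε _ => by ring
    calc ∑ ε, rademacherSum c ε ^ (2 * k)
        ≤ 2 * (2 ^ N * (2 * k - 1)‼ * ((∑ n, Fin.tail c n ^ 2) + c 0 ^ 2) ^ k) := by
          rw [hsplit]
          gcongr
          exact sum_choose_mul_le_doubleFactorial_mul_add_pow (by positivity) (by positivity)
            (by positivity) k _ fun j _ => ih _ j
      _ = 2 ^ (N + 1) * (2 * k - 1)‼ * (∑ n, c n ^ 2) ^ k := by
          rw [Fin.sum_univ_succ, add_comm (c 0 ^ 2), pow_succ]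
          simp only [Fin.tail]
          ring

theorem mean_rademacherSum_pow_le {N : ℕ} (c : Fin N → ℝ) (k : ℕ) :
    (1 / 2 ^ N) * ∑ ε, rademacherSum c ε ^ (2 * k) ≤ (2 * k - 1)‼ * (∑ n, c n ^ 2) ^ k := by
  rw [one_div, inv_mul_le_iff₀ (by positivity), ← mul_assoc]
  exact sum_rademacherSum_pow_le c k

theorem rpow_mean_abs_le_mean_pow {ι : Type*} [Fintype ι] [Nonempty ι] (f : ι → ℝ) {p : ℝ}
    (hp : 0 < p) {k : ℕ} (hpk : p ≤ 2 * k) :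
    ((Fintype.card ι : ℝ)⁻¹ * ∑ i, |f i| ^ p) ^ (2 * k / p)
      ≤ (Fintype.card ι : ℝ)⁻¹ * ∑ i, f i ^ (2 * k) := by
  have hweights : ∑ _i : ι, (Fintype.card ι : ℝ)⁻¹ = 1 := by simp
  have hmean := Real.rpow_arith_mean_le_arith_mean_rpow univ (fun _ => (Fintype.card ι : ℝ)⁻¹)
    (fun i => |f i| ^ p) (fun _ _ => by positivity) hweights (fun _ _ => by positivity)
    ((one_le_div hp).mpr hpk)
  simp only [← mul_sum] at hmean
  convert hmean using 3 with i
  rw [← Real.rpow_mul (abs_nonneg _), mul_div_cancel₀ _ hp.ne',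
    show (2 : ℝ) * k = ((2 * k : ℕ) : ℝ) by push_cast; rfl, Real.rpow_natCast,
    (even_two_mul k).pow_abs]

theorem natCeil_half_le_self {p : ℝ} (hp : 1 ≤ p) : (⌈p / 2⌉₊ : ℝ) ≤ p := by
  have hlt := Nat.ceil_lt_add_one (show 0 ≤ p / 2 by linarith)
  rcases le_or_gt ⌈p / 2⌉₊ 1 with h | h
  · exact le_trans (by exact_mod_cast h) hp
  · have : (2 : ℝ) ≤ ⌈p / 2⌉₊ := by exact_mod_cast h
    linarith

theorem khintchine_upper_general (p : ℝ) (hp : 1 ≤ p) (N : ℕ) (c : Fin N → ℝ) :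
    (1 / 2 ^ N) * ∑ ε : Fin N → Bool, |∑ n, c n * (if ε n then 1 else -1)| ^ p
      ≤ p ^ (p / 2) * (∑ n, (c n) ^ 2) ^ (p / 2) := by
  have hp0 : 0 < p := by linarith
  set k := ⌈p / 2⌉₊
  have hpk : p ≤ 2 * k := by linarith [Nat.le_ceil (p / 2)]
  have hmoment : (1 / 2 ^ N) * ∑ ε, rademacherSum c ε ^ (2 * k) ≤ (p * ∑ n, c n ^ 2) ^ k := by
    rw [mul_pow]
    refine (mean_rademacherSum_pow_le c k).trans (mul_le_mul_of_nonneg_right ?_ (by positivity))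
    calc ((2 * k - 1)‼ : ℝ) ≤ (k : ℝ) ^ k := mod_cast doubleFactorial_two_mul_sub_one_le_pow k
      _ ≤ p ^ k := by gcongr; exact natCeil_half_le_self hp
  have hlyapunov := rpow_mean_abs_le_mean_pow (rademacherSum c) hp0 hpk
  rw [show (Fintype.card (Fin N → Bool) : ℝ)⁻¹ = 1 / 2 ^ N by simp] at hlyapunov
  rw [← Real.mul_rpow hp0.le (by positivity),
    ← Real.rpow_le_rpow_iff (by positivity) (by positivity) (by positivity : 0 < 2 * k / p),
    ← Real.rpow_mul (by positivity), show p / 2 * (2 * k / p) = k by field_simp, Real.rpow_natCast]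
  exact hlyapunov.trans hmoment

theorem khintchine_upper (p : ℝ) (hp : 1 ≤ p) (N : ℕ) (hN : 0 < N) (c : Fin N → ℝ) :
    (1 / 2 ^ N) * ∑ ε : Fin N → Bool, |∑ n, c n * (if ε n then 1 else -1)| ^ p
      ≤ p ^ (p / 2) * (∑ n, (c n) ^ 2) ^ (p / 2) :=
  khintchine_upper_general p hp N c
end

section
/- For every real p > 2, √2 · (Γ((p+1)/2)/√π)^{1/p} ≤ √p; equivalently, 2^{p/2} Γ((p+1)/2) ≤ p^{p/2} √π. -/
open Real

lemma gamma_le_one_of_mem_Icc {x : ℝ} (h1 : 1 ≤ x) (h2 : x ≤ 2) :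
    Real.Gamma x ≤ 1 := by
  have hx : 0 < x := by linarith
  have := Real.convexOn_log_Gamma.2 (Set.mem_Ioi.mpr one_pos)
    (Set.mem_Ioi.mpr two_pos) (by linarith : (0:ℝ) ≤ 2 - x)
    (by linarith : (0:ℝ) ≤ x - 1) (by ring)
  simp only [smul_eq_mul, Function.comp_apply, Real.Gamma_one, Real.Gamma_two,
    Real.log_one] at this
  have hx' : (2 - x) * 1 + (x - 1) * 2 = x := by ring
  rw [hx'] at this
  have hG : 0 < Real.Gamma x := Real.Gamma_pos_of_pos hx
  calc Real.Gamma x = Real.exp (Real.log (Real.Gamma x)) := (Real.exp_log hG).symm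
    _ ≤ Real.exp 0 := Real.exp_le_exp.mpr (by linarith)
    _ = 1 := Real.exp_zero

lemma gamma_aux (n : ℕ) : ∀ x : ℝ, 1 ≤ x → x ≤ n + 2 → Real.Gamma x ≤ x ^ (x - 1) := by
  induction n with
  | zero =>
    intro x h1 h2
    norm_num at h2
    calc Real.Gamma x ≤ 1 := gamma_le_one_of_mem_Icc h1 h2
      _ ≤ x ^ (x - 1) := Real.one_le_rpow h1 (by linarith)
  | succ n ih =>
    intro x h1 h2
    by_cases hx : x ≤ n + 2
    · exact ih x h1 hx
    push_neg at hx
    have hx1 : (1:ℝ) ≤ x - 1 := by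
      have : (0:ℝ) ≤ (n:ℝ) := Nat.cast_nonneg n
      linarith
    have hx0 : (0:ℝ) < x - 1 := by linarith
    have key : Real.Gamma (x - 1) ≤ (x - 1) ^ (x - 1 - 1) := by
      apply ih _ hx1
      push_cast at h2
      linarith
    have hG : Real.Gamma x = (x - 1) * Real.Gamma (x - 1) := by
      have := Real.Gamma_add_one (s := x - 1) (by linarith)
      simpa using this
    calc Real.Gamma x = (x - 1) * Real.Gamma (x - 1) := hG
      _ ≤ (x - 1) * (x - 1) ^ (x - 1 - 1) :=
          mul_le_mul_of_nonneg_left key (by linarith)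
      _ = (x - 1) ^ (x - 1) := by
          rw [mul_comm, ← Real.rpow_add_one (by positivity : (x-1) ≠ 0) (x - 1 - 1)]
          congr 1
          ring
      _ ≤ x ^ (x - 1) := Real.rpow_le_rpow (by linarith) (by linarith) (by linarith)

lemma gamma_le_rpow {x : ℝ} (h1 : 1 ≤ x) : Real.Gamma x ≤ x ^ (x - 1) := by
  obtain ⟨n, hn⟩ := exists_nat_ge x
  exact gamma_aux n x h1 (by push_cast; linarith)

theorem haagerup_constant_le (p : ℝ) (hp : 2 < p) :
    Real.sqrt 2 * (Real.Gamma ((p + 1) / 2) / Real.sqrt Real.pi) ^ (1 / p)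
      ≤ Real.sqrt p := by
  have hp0 : 0 < p := by linarith
  have hpi : (0:ℝ) < Real.sqrt Real.pi := Real.sqrt_pos.mpr Real.pi_pos
  -- key : Γ((p+1)/2) ≤ √π (p/2)^(p/2)
  have key : Real.Gamma ((p + 1) / 2) ≤ Real.sqrt Real.pi * (p / 2) ^ (p / 2) := by
    have h1 : Real.Gamma ((p + 1) / 2) ≤ ((p + 1) / 2) ^ ((p - 1) / 2) := by
      have := gamma_le_rpow (x := (p + 1) / 2) (by linarith)
      have e : (p + 1) / 2 - 1 = (p - 1) / 2 := by ring
      rwa [e] at this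
    have h2 : ((p + 1) / 2) ^ ((p - 1) / 2)
        ≤ (p / 2) ^ ((p - 1) / 2) * (1 + 1 / p) ^ ((p - 1) / 2) := by
      rw [← Real.mul_rpow (by positivity) (by positivity)]
      apply Real.rpow_le_rpow (by positivity) (le_of_eq (by field_simp)) (by linarith)
    have h3 : (1 + 1 / p) ^ ((p - 1) / 2) ≤ Real.sqrt Real.pi := by
      have e1 : (1 + 1 / p) ^ ((p - 1) / 2) ≤ (1 + 1 / p) ^ (p / 2) := by
        have h01 : (0:ℝ) < 1 / p := by positivity
        apply Real.rpow_le_rpow_of_exponent_le (by linarith) (by linarith)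
      have e2 : (1 + 1 / p) ^ (p / 2) ≤ Real.exp (1 / 2) := by
        have : (1 + 1 / p : ℝ) ≤ Real.exp (1 / p) := by
          have := Real.add_one_le_exp (1 / p)
          linarith
        calc (1 + 1 / p) ^ (p / 2) ≤ Real.exp (1 / p) ^ (p / 2) :=
              Real.rpow_le_rpow (by positivity) this (by positivity)
          _ = Real.exp (1 / p * (p / 2)) := by rw [← Real.exp_mul]
          _ = Real.exp (1 / 2) := by rw [mul_comm (1/p) (p/2)]; field_simp
      have e3 : Real.exp (1 / 2) ≤ Real.sqrt Real.pi := by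
        have hepi : Real.exp 1 ≤ Real.pi := by
          have h1 := Real.exp_one_lt_d9
          have h2 := Real.pi_gt_three
          linarith
        calc Real.exp (1 / 2) = Real.exp 1 ^ (1 / 2 : ℝ) := by
              rw [← Real.exp_mul]; norm_num
          _ ≤ Real.pi ^ (1 / 2 : ℝ) :=
              Real.rpow_le_rpow (Real.exp_pos 1).le hepi (by norm_num)
          _ = Real.sqrt Real.pi := (Real.sqrt_eq_rpow Real.pi).symm
      linarith
    have h4 : (p / 2) ^ ((p - 1) / 2) ≤ (p / 2) ^ (p / 2) := by
      apply Real.rpow_le_rpow_of_exponent_le (by linarith) (by linarith)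
    calc Real.Gamma ((p + 1) / 2) ≤ ((p + 1) / 2) ^ ((p - 1) / 2) := h1
      _ ≤ (p / 2) ^ ((p - 1) / 2) * (1 + 1 / p) ^ ((p - 1) / 2) := h2
      _ ≤ (p / 2) ^ ((p - 1) / 2) * Real.sqrt Real.pi :=
          mul_le_mul_of_nonneg_left h3 (by positivity)
      _ ≤ (p / 2) ^ (p / 2) * Real.sqrt Real.pi :=
          mul_le_mul_of_nonneg_right h4 hpi.le
      _ = Real.sqrt Real.pi * (p / 2) ^ (p / 2) := by ring
  -- conclude
  have hQ : Real.Gamma ((p + 1) / 2) / Real.sqrt Real.pi ≤ (p / 2) ^ (p / 2) := by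
    rw [div_le_iff₀ hpi]
    linarith [key]
  have hQ0 : 0 ≤ Real.Gamma ((p + 1) / 2) / Real.sqrt Real.pi := by
    positivity
  have step : (Real.Gamma ((p + 1) / 2) / Real.sqrt Real.pi) ^ (1 / p)
      ≤ (p / 2) ^ (1 / 2 : ℝ) := by
    calc (Real.Gamma ((p + 1) / 2) / Real.sqrt Real.pi) ^ (1 / p)
        ≤ ((p / 2) ^ (p / 2)) ^ (1 / p) :=
          Real.rpow_le_rpow hQ0 hQ (by positivity)
      _ = (p / 2) ^ (1 / 2 : ℝ) := by
          rw [← Real.rpow_mul (by positivity)]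
          congr 1
          field_simp
  calc Real.sqrt 2 * (Real.Gamma ((p + 1) / 2) / Real.sqrt Real.pi) ^ (1 / p)
      ≤ Real.sqrt 2 * (p / 2) ^ (1 / 2 : ℝ) :=
        mul_le_mul_of_nonneg_left step (Real.sqrt_nonneg 2)
    _ = Real.sqrt p := by
        rw [Real.sqrt_eq_rpow, Real.sqrt_eq_rpow,
          ← Real.mul_rpow (by norm_num) (by positivity),
          show (2:ℝ) * (p / 2) = p by ring]
end
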